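/- Existence of an error locator: let Ω be a P-closed set of rank n with P-basis B, and let G ∈ F_{q^m}[x;σ]_n with wt_Ω(G) ≤ t. Then there exists a nonzero skew polynomial L ∈ F_{q^m}[x;σ] with deg(L) ≤ t such that (L·G)(b) = 0 for all b ∈ Ω (equivalently, E_B(L·G) = 0). -/

import Mathlib

open Finset

/-- The `i`-th truncated norm `N_i(a) = σ^{i−1}(a)⋯σ(a)·a`. -/
def skewNorm {K : Type*} [Field K] (σ : K ≃+* K) (i : ℕ) (a : K) : K :=
  ∏ j ∈ Finset.range i, (σ ^ j) a

/-- Evaluation of a skew polynomial `F ∈ K[x;σ]` (encoded by its coefficients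
`F : ℕ →₀ K`) at `a`: the remainder of right division of `F` by `x − a`, given by
the closed formula `F(a) = Σᵢ Fᵢ · N_i(a)`. -/
noncomputable def skewEval {K : Type*} [Field K] (σ : K ≃+* K) (F : ℕ →₀ K) (a : K) : K :=
  F.sum fun i c => c * skewNorm σ i a

/-- Multiplication in the skew polynomial ring `K[x;σ]`, where `x·a = σ(a)·x`. -/
noncomputable def skewMul {K : Type*} [Field K] (σ : K ≃+* K) (U V : ℕ →₀ K) : ℕ →₀ K :=
  U.sum fun i a => V.sum fun j b => Finsupp.single (i + j) (a * (σ ^ i) b)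

/-- Degree of a skew polynomial encoded as `ℕ →₀ K` (with `deg 0 = 0` by convention). -/
def skewDeg {K : Type*} [Field K] (F : ℕ →₀ K) : ℕ := F.support.sup id

/-- `F` is the (monic) minimal skew polynomial of the set `Ω`: it is nonzero, monic,
vanishes on `Ω`, and has minimal degree among nonzero skew polynomials vanishing on `Ω`. -/
def IsMinSkewPoly {K : Type*} [Field K] (σ : K ≃+* K) (Ω : Set K) (F : ℕ →₀ K) : Prop :=
  F ≠ 0 ∧ F (skewDeg F) = 1 ∧ (∀ b ∈ Ω, skewEval σ F b = 0) ∧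
    ∀ G : ℕ →₀ K, G ≠ 0 → (∀ b ∈ Ω, skewEval σ G b = 0) → skewDeg F ≤ skewDeg G

/-- `a` is P-independent from the set `T`: some skew polynomial vanishing on `T` does not
vanish at `a` (equivalently, `a` is not in the P-closure of `T`). -/
def PIndepFrom {K : Type*} [Field K] (σ : K ≃+* K) (a : K) (T : Set K) : Prop :=
  ∃ F : ℕ →₀ K, (∀ b ∈ T, skewEval σ F b = 0) ∧ skewEval σ F a ≠ 0

/-- A set is P-independent if each of its elements is P-independent from the rest. -/
def PIndep {K : Type*} [Field K] (σ : K ≃+* K) (S : Set K) : Prop :=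
  ∀ a ∈ S, PIndepFrom σ a (S \ {a})

/-! The vectors `((L·G)(b))_{b ∈ Ω}`, for `L` of degree `≤ t`, are linear in `L` and lie in
`V ∩ ker ρ`, where `V ⊆ K^Ω` is the space of all evaluation vectors on `Ω` and `ρ` restricts
to `Z = Z(G) ∩ Ω`: they vanish on `Z` because `(L·G)(b) = Σᵢ Lᵢ N_i(b) σⁱ(G(b))`.
As `F_Ω` is monic of degree `n` and vanishes on `Ω`, `dim V ≤ n`; by minimality of `F_Z`
the evaluations of `1, x, …, x^(k-1)` on `Z` are independent, so `dim ρ(V) ≥ k = deg F_Z`.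
Hence `dim (V ∩ ker ρ) ≤ n - k ≤ t`, and the `t + 1` coefficients of `L` admit a nontrivial
solution. -/

open Module Finsupp

section LinearAlgebra

variable {K M N : Type*} [Field K] [AddCommGroup M] [Module K M] [AddCommGroup N] [Module K N]

instance (d : ℕ) : FiniteDimensional K (supported K K (Set.Iio d)) :=
  Module.Finite.equiv (supportedEquivFinsupp (Set.Iio d)).symm

lemma finrank_supported_Iio (d : ℕ) : finrank K (supported K K (Set.Iio d)) = d := by
  rw [(supportedEquivFinsupp (M := K) (R := K) (Set.Iio d)).finrank_eq, finrank_finsupp_self]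
  simp

lemma finrank_map_eq_of_disjoint_ker (f : M →ₗ[K] N) {p : Submodule K M}
    (h : Disjoint p (LinearMap.ker f)) : finrank K (p.map f) = finrank K p := by
  rw [← LinearMap.range_domRestrict,
    LinearMap.finrank_range_of_inj (LinearMap.injective_domRestrict_iff.2 h)]

lemma finrank_inf_ker_add_finrank_map (V : Submodule K M) [FiniteDimensional K V]
    (f : M →ₗ[K] N) :
    finrank K ↥(V ⊓ LinearMap.ker f) + finrank K (V.map f) = finrank K V := by
  have h := (f.domRestrict V).finrank_range_add_finrank_ker
  rw [LinearMap.range_domRestrict, LinearMap.ker_domRestrict, ← Submodule.finrank_map_subtype_eq,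
    Submodule.map_comap_subtype] at h
  omega

lemma exists_ne_zero_mem_supported_Iio_of_finrank_lt (f : (ℕ →₀ K) →ₗ[K] M)
    (W : Submodule K M) [FiniteDimensional K W] (hf : LinearMap.range f ≤ W) {d : ℕ}
    (hW : finrank K W < d) : ∃ L ∈ supported K K (Set.Iio d), L ≠ 0 ∧ f L = 0 := by
  let g := (f.domRestrict (supported K K (Set.Iio d))).codRestrict W fun L => hf ⟨L, rfl⟩
  have hg : LinearMap.ker g ≠ ⊥ :=
    LinearMap.ker_ne_bot_of_finrank_lt (V := supported K K (Set.Iio d)) (V₂ := W)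
      (by rwa [finrank_supported_Iio])
  obtain ⟨⟨L, hL⟩, hker, hne⟩ := Submodule.exists_mem_ne_zero_of_ne_bot hg
  refine ⟨L, hL, fun h => hne (by simp [h]), ?_⟩
  simpa [g] using congrArg Subtype.val (LinearMap.mem_ker.1 hker)

end LinearAlgebra

section SkewPolynomial

variable {K : Type*} [Field K] (σ : K ≃+* K)

lemma skewNorm_add (i j : ℕ) (b : K) :
    skewNorm σ (i + j) b = skewNorm σ i b * (σ ^ i) (skewNorm σ j b) := by
  simp only [skewNorm, Finset.prod_range_add, map_prod, pow_add]
  rfl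

lemma skewEval_eq_linearCombination (F : ℕ →₀ K) (b : K) :
    skewEval σ F b = linearCombination K (fun i => skewNorm σ i b) F :=
  rfl

lemma skewNorm_mul_map_skewEval (m : ℕ) (F : ℕ →₀ K) (b : K) :
    skewNorm σ m b * (σ ^ m) (skewEval σ F b) =
      F.sum fun i c => (σ ^ m) c * skewNorm σ (m + i) b := by
  simp only [skewEval, Finsupp.sum, map_sum, map_mul, Finset.mul_sum, skewNorm_add]
  exact Finset.sum_congr rfl fun _ _ => by ring

lemma skewEval_skewMul (L G : ℕ →₀ K) (b : K) :
    skewEval σ (skewMul σ L G) b =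
      L.sum fun i a => a * (skewNorm σ i b * (σ ^ i) (skewEval σ G b)) := by
  rw [skewEval_eq_linearCombination, skewMul, map_finsuppSum]
  refine Finsupp.sum_congr fun i _ => ?_
  rw [map_finsuppSum, skewNorm_mul_map_skewEval, Finsupp.mul_sum]
  refine Finsupp.sum_congr fun j _ => ?_
  rw [linearCombination_single, smul_eq_mul, mul_assoc]

lemma skewEval_skewMul_eq_zero (L : ℕ →₀ K) {G : ℕ →₀ K} {b : K}
    (hb : skewEval σ G b = 0) : skewEval σ (skewMul σ L G) b = 0 := by
  simp [skewEval_skewMul, hb]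

noncomputable def skewMulRight (G : ℕ →₀ K) : (ℕ →₀ K) →ₗ[K] (ℕ →₀ K) where
  toFun L := skewMul σ L G
  map_add' L₁ L₂ := by
    refine Finsupp.sum_add_index' (fun i => by simp) fun i a₁ a₂ => ?_
    simp only [add_mul, single_add, Finsupp.sum_add]
  map_smul' c L := by
    rw [skewMul, Finsupp.sum_smul_index' (fun i => by simp), RingHom.id_apply, skewMul,
      Finsupp.smul_sum]
    simp only [Finsupp.smul_sum, smul_single, smul_eq_mul, mul_assoc]

@[simp]
lemma skewMulRight_apply (G L : ℕ →₀ K) : skewMulRight σ G L = skewMul σ L G := rfl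

lemma le_skewDeg_of_mem_support {F : ℕ →₀ K} {i : ℕ} (hi : i ∈ F.support) : i ≤ skewDeg F :=
  Finset.le_sup (f := id) hi

lemma skewDeg_lt_of_mem_supported {F : ℕ →₀ K} {d : ℕ} (hF : F ≠ 0)
    (hd : F ∈ supported K K (Set.Iio d)) : skewDeg F < d := by
  have hsupp : ∀ i ∈ F.support, i < d := fun i hi => by simpa using (mem_supported K F).1 hd hi
  obtain ⟨i, hi⟩ := Finsupp.support_nonempty_iff.2 hF
  exact (Finset.sup_lt_iff ((Nat.zero_le i).trans_lt (hsupp i hi))).2 hsupp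

noncomputable def skewEvalOn (S : Set K) : (ℕ →₀ K) →ₗ[K] (S → K) :=
  linearCombination K fun i (b : S) => skewNorm σ i b

variable {σ} in
lemma skewEvalOn_apply (S : Set K) (F : ℕ →₀ K) (b : S) :
    skewEvalOn σ S F b = skewEval σ F b := by
  simp [skewEvalOn, skewEval_eq_linearCombination, linearCombination_apply, Finsupp.sum]

lemma skewEvalOn_single_one (S : Set K) (i : ℕ) :
    skewEvalOn σ S (single i 1) = fun b : S => skewNorm σ i b := by
  rw [skewEvalOn, linearCombination_single, one_smul]

lemma funLeft_inclusion_comp_skewEvalOn {S T : Set K} (h : T ⊆ S) :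
    LinearMap.funLeft K K (Set.inclusion h) ∘ₗ skewEvalOn σ S = skewEvalOn σ T := by
  ext F b
  simp [skewEvalOn_apply]

lemma range_skewEvalOn_eq_map_supported {S : Set K} {F : ℕ →₀ K} {d : ℕ}
    (hd : skewDeg F = d) (hmonic : F d = 1) (hF : ∀ b ∈ S, skewEval σ F b = 0) :
    LinearMap.range (skewEvalOn σ S) = (supported K K (Set.Iio d)).map (skewEvalOn σ S) := by
  refine le_antisymm ?_ LinearMap.map_le_range
  rw [LinearMap.range_eq_map, ← supported_univ, supported_eq_span_single, Submodule.map_span,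
    Submodule.span_le]
  rintro _ ⟨_, ⟨j, -, rfl⟩, rfl⟩
  induction j using Nat.strong_induction_on with
  | _ j ih =>
  simp only [SetLike.mem_coe] at ih ⊢
  by_cases hj : j < d
  · exact Submodule.mem_map_of_mem (single_mem_supported K 1 hj)
  obtain ⟨m, rfl⟩ : ∃ m, j = m + d := ⟨j - d, by omega⟩
  have hd_mem : d ∈ F.support := by simp [hmonic]
  -- `x^m · F` vanishes on `S` and is `x^(m+d)` plus terms of degree `< m + d`.
  have hrel : (fun b : S => skewNorm σ (m + d) b) =
      -∑ i ∈ F.support.erase d, (σ ^ m) (F i) • fun b : S => skewNorm σ (m + i) b := by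
    funext b
    have h := skewNorm_mul_map_skewEval σ m F b
    rw [hF b b.2, map_zero, mul_zero, Finsupp.sum, ← Finset.add_sum_erase _ _ hd_mem, hmonic,
      map_one, one_mul] at h
    simpa [eq_neg_iff_add_eq_zero] using h.symm
  rw [skewEvalOn_single_one, hrel]
  refine neg_mem (Submodule.sum_mem _ fun i hi => Submodule.smul_mem _ _ ?_)
  rw [← skewEvalOn_single_one]
  have hi_le := le_skewDeg_of_mem_support (Finset.mem_of_mem_erase hi)
  have hi_ne := Finset.ne_of_mem_erase hi
  exact ih _ (by omega)

lemma disjoint_supported_ker_skewEvalOn {S : Set K} {d : ℕ}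
    (hmin : ∀ G : ℕ →₀ K, G ≠ 0 → (∀ b ∈ S, skewEval σ G b = 0) → d ≤ skewDeg G) :
    Disjoint (supported K K (Set.Iio d)) (LinearMap.ker (skewEvalOn σ S)) := by
  rw [Submodule.disjoint_def]
  intro G hG hker
  by_contra hne
  have hvan : ∀ b ∈ S, skewEval σ G b = 0 := fun b hb => by
    rw [← skewEvalOn_apply S G ⟨b, hb⟩, LinearMap.mem_ker.1 hker, Pi.zero_apply]
  exact (skewDeg_lt_of_mem_supported hne hG).not_ge (hmin G hne hvan)

end SkewPolynomial

theorem error_locator_exists_general {K : Type*} [Field K] (σ : K ≃+* K)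
    (Ω : Set K) (FΩ : ℕ →₀ K) (hFΩ : IsMinSkewPoly σ Ω FΩ)
    (n : ℕ) (hn : skewDeg FΩ = n)
    (G : ℕ →₀ K) (t : ℕ)
    (hwt : ∃ FZ : ℕ →₀ K,
      IsMinSkewPoly σ {a | a ∈ Ω ∧ skewEval σ G a = 0} FZ ∧ n - skewDeg FZ ≤ t) :
    ∃ L : ℕ →₀ K, L ≠ 0 ∧ (∀ i, t < i → L i = 0) ∧
      ∀ b ∈ Ω, skewEval σ (skewMul σ L G) b = 0 := by
  obtain ⟨FZ, hFZ, hwt⟩ := hwt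
  have hZΩ : {a | a ∈ Ω ∧ skewEval σ G a = 0} ⊆ Ω := fun a ha => ha.1
  let ρ := LinearMap.funLeft K K (Set.inclusion hZΩ)
  let V := (supported K K (Set.Iio n)).map (skewEvalOn σ Ω)
  have hrange : LinearMap.range (skewEvalOn σ Ω) = V :=
    range_skewEvalOn_eq_map_supported σ hn (hn ▸ hFΩ.2.1) hFΩ.2.2.1
  have hV : finrank K V ≤ n := (Submodule.finrank_map_le _ _).trans (finrank_supported_Iio n).le
  have hρV : skewDeg FZ ≤ finrank K (V.map ρ) := by
    have hle : (supported K K (Set.Iio (skewDeg FZ))).map (skewEvalOn σ _) ≤ V.map ρ := by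
      rw [← hrange, ← LinearMap.range_comp, funLeft_inclusion_comp_skewEvalOn]
      exact LinearMap.map_le_range
    refine le_of_eq_of_le ?_ (Submodule.finrank_mono hle)
    rw [finrank_map_eq_of_disjoint_ker _ (disjoint_supported_ker_skewEvalOn σ hFZ.2.2.2),
      finrank_supported_Iio]
  have hW : finrank K ↥(V ⊓ LinearMap.ker ρ) < t + 1 := by
    have := finrank_inf_ker_add_finrank_map V ρ
    omega
  have hΦ : LinearMap.range (skewEvalOn σ Ω ∘ₗ skewMulRight σ G) ≤ V ⊓ LinearMap.ker ρ := by
    rintro _ ⟨L, rfl⟩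
    refine ⟨hrange ▸ LinearMap.mem_range_self _ _, LinearMap.mem_ker.2 (funext fun z => ?_)⟩
    simpa [ρ, skewEvalOn_apply] using skewEval_skewMul_eq_zero σ L z.2.2
  obtain ⟨L, hLt, hL0, hL⟩ := exists_ne_zero_mem_supported_Iio_of_finrank_lt _ _ hΦ hW
  refine ⟨L, hL0, fun i hi => (mem_supported' K L).1 hLt i (by simpa using hi), fun b hb => ?_⟩
  simpa [skewEvalOn_apply] using congrFun hL ⟨b, hb⟩

/-- Existence of an error locator: let `Ω` be a P-closed set of rank `n` and
`G` a skew polynomial of degree `< n` with skew weight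
`wt_Ω(G) = n − Rk(Z(G) ∩ Ω) ≤ t`.  Then there is a nonzero skew polynomial `L` of
degree at most `t` such that `(L·G)(b) = 0` for all `b ∈ Ω`. -/
theorem error_locator_exists {K : Type*} [Field K] [Fintype K] (σ : K ≃+* K)
    (Ω : Set K) (FΩ : ℕ →₀ K) (hFΩ : IsMinSkewPoly σ Ω FΩ)
    (hclosed : Ω = {a | skewEval σ FΩ a = 0})
    (n : ℕ) (hn : skewDeg FΩ = n)
    (G : ℕ →₀ K) (hdegG : ∀ i, n ≤ i → G i = 0) (t : ℕ)
    (hwt : ∃ FZ : ℕ →₀ K,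
      IsMinSkewPoly σ {a | a ∈ Ω ∧ skewEval σ G a = 0} FZ ∧ n - skewDeg FZ ≤ t) :
    ∃ L : ℕ →₀ K, L ≠ 0 ∧ (∀ i, t < i → L i = 0) ∧
      ∀ b ∈ Ω, skewEval σ (skewMul σ L G) b = 0 :=
  error_locator_exists_general σ Ω FΩ hFΩ n hn G t hwt
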